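/- Let k be a field, G a group, and N a normal subgroup of G such that the quotient G/N is cyclic of finite order n; fix s ∈ G whose image generates G/N. Let ρ : N → kˣ be a group homomorphism, and let V = { f : G → k | f(hx) = ρ(h)·f(x) for all h ∈ N and x ∈ G }, which is a k-vector space of dimension n on which G acts k-linearly by (g·f)(x) = f(xg) (the representation of G induced from the character ρ of N). Let d be a positive divisor of n and let g ∈ G be an element whose image in G/N equals the image of s^d. Then g^{n/d} ∈ N, each conjugate s^{−i} g^{n/d} s^{i} lies in N, and the characteristic polynomial of the k-linear endomorphism of V given by the action of g equals ∏_{i=0}^{d−1} ( T^{n/d} − ρ( s^{−i} g^{n/d} s^{i} ) ). -/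
import Mathlib


open Polynomial
open Matrix

/-- The concrete model of the representation of `G` induced from a character `ρ : N → kˣ` of a
subgroup `N ≤ G`: the space of functions `f : G → k` satisfying `f (h * x) = ρ h * f x` for all
`h ∈ N` and `x ∈ G`. -/
def IndSpace (k : Type*) [Field k] {G : Type*} [Group G] (N : Subgroup G) (ρ : N →* kˣ) :
    Submodule k (G → k) where
  carrier := {f | ∀ (h : N) (x : G), f ((h : G) * x) = (ρ h : k) * f x}
  add_mem' := by
    intro f g hf hg h x
    simp only [Pi.add_apply, hf h x, hg h x, mul_add]
  zero_mem' := by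
    intro h x
    simp
  smul_mem' := by
    intro c f hf h x
    simp only [Pi.smul_apply, smul_eq_mul, hf h x]
    ring

/-- The `k`-linear action of `g : G` on the induced representation, `(g • f) x = f (x * g)`. -/
def indAct {k G : Type*} [Field k] [Group G] (N : Subgroup G) (ρ : N →* kˣ) (g : G) :
    IndSpace k N ρ →ₗ[k] IndSpace k N ρ where
  toFun f := ⟨fun x => (f : G → k) (x * g), by
    intro h x
    have hf : ∀ (h : N) (x : G), (f : G → k) ((h : G) * x) = (ρ h : k) * (f : G → k) x := f.2
    simpa [mul_assoc] using hf h (x * g)⟩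
  map_add' f₁ f₂ := rfl
  map_smul' c f := rfl

lemma det_cyclic {R : Type*} [CommRing R] (m : ℕ) (w : Fin (m+1) → R) :
    (Matrix.of fun r c : Fin (m+1) =>
      (if r = c then (X : R[X]) else 0) -
        (if ((r:ℕ)+1 = (c:ℕ) ∨ ((r:ℕ) = m ∧ (c:ℕ) = 0)) then C (w r) else 0)).det
      = X^(m+1) - C (∏ r, w r) := by
  cases m with
  | zero =>
      rw [Matrix.det_fin_one]
      simp
  | succ m =>
      set A : Matrix (Fin (m+2)) (Fin (m+2)) R[X] := Matrix.of fun r c : Fin (m+2) =>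
            (if r = c then (X : R[X]) else 0) -
              (if ((r:ℕ)+1 = (c:ℕ) ∨ ((r:ℕ) = m+1 ∧ (c:ℕ) = 0)) then C (w r) else 0) with hA
      have hAapp : ∀ r c : Fin (m+2), A r c = (if r = c then (X : R[X]) else 0) -
              (if ((r:ℕ)+1 = (c:ℕ) ∨ ((r:ℕ) = m+1 ∧ (c:ℕ) = 0)) then C (w r) else 0) := by
        intro r c; rw [hA]; rfl
      rw [Matrix.det_succ_column_zero]
      -- the minor at (0,0) : upper triangular
      have hminor0 : (A.submatrix (Fin.succAbove 0) Fin.succ).det = X ^ (m+1) := by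
        have hent : ∀ r c : Fin (m+1), (A.submatrix (Fin.succAbove 0) Fin.succ) r c =
            (if r = c then (X : R[X]) else 0) -
              (if ((r:ℕ)+1 = (c:ℕ)) then C (w r.succ) else 0) := by
          intro r c
          simp only [Matrix.submatrix_apply, Fin.succAbove_zero, hAapp]
          congr 1
          · congr 1
            simp [Fin.ext_iff]
          · have h1 : ((r.succ : Fin (m+2)) : ℕ) = (r:ℕ)+1 := rfl
            have h2 : ((c.succ : Fin (m+2)) : ℕ) = (c:ℕ)+1 := rfl
            rw [h1, h2]
            congr 1
            simp only [eq_iff_iff]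
            omega
        rw [Matrix.det_of_upperTriangular]
        · rw [Finset.prod_congr rfl (fun r _ => ?_), Finset.prod_const,
            Finset.card_univ, Fintype.card_fin]
          rw [hent r r]
          simp
        · intro r c hrc
          rw [hent r c]
          have h1 : ¬ (r = c) := by
            intro h; subst h; exact lt_irrefl _ hrc
          have h2 : ¬ ((r:ℕ)+1 = (c:ℕ)) := by
            have : (c:ℕ) < (r:ℕ) := hrc
            omega
          simp [h1, h2]
      -- the minor at (last, 0) : lower triangular
      have hminorlast : (A.submatrix (Fin.succAbove (Fin.last (m+1))) Fin.succ).det =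
          (-1)^(m+1) * C (∏ r : Fin (m+1), w r.castSucc) := by
        have hent : ∀ r c : Fin (m+1), (A.submatrix (Fin.succAbove (Fin.last (m+1))) Fin.succ) r c =
            (if (r:ℕ) = (c:ℕ)+1 then (X : R[X]) else 0) -
              (if (r:ℕ) = (c:ℕ) then C (w r.castSucc) else 0) := by
          intro r c
          simp only [Matrix.submatrix_apply, Fin.succAbove_last, hAapp]
          have h1 : ((r.castSucc : Fin (m+2)) : ℕ) = (r:ℕ) := rfl
          have h2 : ((c.succ : Fin (m+2)) : ℕ) = (c:ℕ)+1 := rfl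
          congr 1
          · congr 1
            simp only [eq_iff_iff, Fin.ext_iff, h1, h2]
          · rw [h1, h2]
            congr 1
            simp only [eq_iff_iff]
            have hr : (r:ℕ) < m + 1 := r.isLt
            omega
        have hdiag : ∀ r : Fin (m+1), (A.submatrix (Fin.last (m + 1)).succAbove Fin.succ) r r
            = (-1 : R[X]) * C (w r.castSucc) := by
          intro r
          rw [hent r r]
          have : ¬ ((r:ℕ) = (r:ℕ)+1) := by omega
          simp [this]
        rw [Matrix.det_of_lowerTriangular]
        · rw [Finset.prod_congr rfl (fun r _ => hdiag r),
            Finset.prod_mul_distrib, Finset.prod_const, Finset.card_univ, Fintype.card_fin,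
            ← map_prod]
        · intro r c hrc
          rw [hent r c]
          have hlt : (r:ℕ) < (c:ℕ) := hrc
          have h1 : ¬ ((r:ℕ) = (c:ℕ)+1) := by omega
          have h2 : ¬ ((r:ℕ) = (c:ℕ)) := by omega
          simp [h1, h2]
      -- entries of the first column
      have hcol : ∀ i : Fin (m+2), A i 0 =
          (if i = 0 then (X:R[X]) else 0) - (if i = Fin.last (m+1) then C (w i) else 0) := by
        intro i
        rw [hAapp]
        congr 1
        congr 1
        simp only [eq_iff_iff, Fin.ext_iff, Fin.val_zero, Fin.val_last, and_true]
        omega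
      have hzero : (0 : Fin (m+2)) ≠ Fin.last (m+1) := by
        simp [Fin.ext_iff]
      rw [Finset.sum_eq_add_of_mem (0 : Fin (m+2)) (Fin.last (m+1)) (Finset.mem_univ _)
        (Finset.mem_univ _) hzero (fun i _ hi => by rw [hcol i]; simp [hi.1, hi.2])]
      rw [hcol, hcol, hminor0, hminorlast]
      simp only [if_pos rfl, if_neg hzero, if_neg hzero.symm, Fin.val_zero, Fin.val_last,
        pow_zero, sub_zero, zero_sub]
      rw [Fin.prod_univ_castSucc (f := w), C_mul]
      have ht : ((-1:R[X])^(m+1)) * ((-1:R[X])^(m+1)) = 1 := by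
        rw [← pow_add]
        exact Even.neg_one_pow ⟨m+1, by ring⟩
      simp only [if_true]
      linear_combination (- C (w (Fin.last (m+1))) * C (∏ r : Fin (m+1), w r.castSucc)) * ht

/-- Extension of a character of a subgroup by zero. -/
noncomputable def rhoTil {k G : Type*} [Field k] [Group G] (N : Subgroup G) (ρ : N →* kˣ)
    (x : G) : k :=
  letI := Classical.dec (x ∈ N)
  if h : x ∈ N then ((ρ ⟨x, h⟩ : kˣ) : k) else 0

section rhoTil
variable {k G : Type*} [Field k] [Group G] {N : Subgroup G} {ρ : N →* kˣ}

lemma rhoTil_of_mem {x : G} (h : x ∈ N) : rhoTil N ρ x = ((ρ ⟨x, h⟩ : kˣ) : k) := by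
  unfold rhoTil
  exact dif_pos h

lemma rhoTil_of_notMem {x : G} (h : ¬ x ∈ N) : rhoTil N ρ x = 0 := by
  unfold rhoTil
  exact dif_neg h

lemma rhoTil_one : rhoTil N ρ (1 : G) = 1 := by
  rw [rhoTil_of_mem N.one_mem]
  have : (⟨(1:G), N.one_mem⟩ : N) = 1 := rfl
  rw [this, _root_.map_one, Units.val_one]

lemma rhoTil_mul_of_mem {x y : G} (hx : x ∈ N) (hy : y ∈ N) :
    rhoTil N ρ (x * y) = rhoTil N ρ x * rhoTil N ρ y := by
  rw [rhoTil_of_mem (N.mul_mem hx hy), rhoTil_of_mem hx, rhoTil_of_mem hy]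
  have : (⟨x * y, N.mul_mem hx hy⟩ : N) = ⟨x, hx⟩ * ⟨y, hy⟩ := rfl
  rw [this, _root_.map_mul, Units.val_mul]

lemma rhoTil_mul_left {x : G} (hx : x ∈ N) (y : G) :
    rhoTil N ρ (x * y) = rhoTil N ρ x * rhoTil N ρ y := by
  by_cases hy : y ∈ N
  · exact rhoTil_mul_of_mem hx hy
  · rw [rhoTil_of_notMem hy, rhoTil_of_notMem (fun hxy => hy ?_), mul_zero]
    have := N.mul_mem (N.inv_mem hx) hxy
    rwa [inv_mul_cancel_left] at this

lemma rhoTil_mul_right (x : G) {y : G} (hy : y ∈ N) :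
    rhoTil N ρ (x * y) = rhoTil N ρ x * rhoTil N ρ y := by
  by_cases hx : x ∈ N
  · exact rhoTil_mul_of_mem hx hy
  · rw [rhoTil_of_notMem hx, rhoTil_of_notMem (fun hxy => hx ?_), zero_mul]
    have := N.mul_mem hxy (N.inv_mem hy)
    rwa [mul_inv_cancel_right] at this

lemma rhoTil_ne_zero {x : G} (h : x ∈ N) : rhoTil N ρ x ≠ 0 := by
  rw [rhoTil_of_mem h]
  exact Units.ne_zero _

end rhoTil

lemma charmatrix_blockDiagonal {R : Type*} [CommRing R] {ι κ : Type*} [DecidableEq ι]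
    [DecidableEq κ] [Fintype ι] [Fintype κ] (M : κ → Matrix ι ι R) :
    Matrix.charmatrix (Matrix.blockDiagonal M) =
      Matrix.blockDiagonal (fun i => Matrix.charmatrix (M i)) := by
  ext ⟨r, i⟩ ⟨c, j⟩
  by_cases h : (⟨r, i⟩ : ι × κ) = ⟨c, j⟩
  · obtain ⟨h1, h2⟩ := Prod.mk.injEq .. ▸ h
    subst h1; subst h2
    rw [Matrix.charmatrix_apply_eq, Matrix.blockDiagonal_apply_eq,
      Matrix.blockDiagonal_apply_eq, Matrix.charmatrix_apply_eq]
  · rw [Matrix.charmatrix_apply_ne _ _ _ h]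
    by_cases hij : i = j
    · subst hij
      have hrc : r ≠ c := fun hrc => h (by rw [hrc])
      rw [Matrix.blockDiagonal_apply_eq, Matrix.blockDiagonal_apply_eq,
        Matrix.charmatrix_apply_ne _ _ _ hrc]
    · rw [Matrix.blockDiagonal_apply_ne _ _ _ hij, Matrix.blockDiagonal_apply_ne _ _ _ hij,
        map_zero, neg_zero]

lemma charpoly_blockDiagonal {R : Type*} [CommRing R] {ι κ : Type*} [DecidableEq ι]
    [DecidableEq κ] [Fintype ι] [Fintype κ] (M : κ → Matrix ι ι R) :
    Matrix.charpoly (Matrix.blockDiagonal M) = ∏ i, Matrix.charpoly (M i) := by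
  unfold Matrix.charpoly
  rw [charmatrix_blockDiagonal, Matrix.det_blockDiagonal]

lemma charpoly_cyclic {R : Type*} [CommRing R] (m : ℕ) (hm : 0 < m) (w : Fin m → R) :
    Matrix.charpoly (Matrix.of fun r c : Fin m =>
      if ((r:ℕ)+1 = (c:ℕ) ∨ ((r:ℕ) = m-1 ∧ (c:ℕ) = 0)) then w r else 0)
      = X ^ m - C (∏ r, w r) := by
  obtain ⟨m', rfl⟩ : ∃ m', m = m' + 1 := ⟨m - 1, by omega⟩
  rw [Matrix.charpoly]
  have : Matrix.charmatrix (Matrix.of fun r c : Fin (m'+1) =>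
      if ((r:ℕ)+1 = (c:ℕ) ∨ ((r:ℕ) = (m'+1)-1 ∧ (c:ℕ) = 0)) then w r else 0) =
      Matrix.of fun r c : Fin (m'+1) =>
        (if r = c then (X : R[X]) else 0) -
          (if ((r:ℕ)+1 = (c:ℕ) ∨ ((r:ℕ) = m' ∧ (c:ℕ) = 0)) then C (w r) else 0) := by
    ext r c
    rw [Matrix.charmatrix_apply, Matrix.diagonal_apply]
    simp only [Matrix.of_apply, Nat.add_sub_cancel]
    rw [apply_ite C, map_zero]
  rw [this, det_cyclic]

section basVec
variable {k G : Type*} [Field k] [Group G] (N : Subgroup G) (ρ : N →* kˣ)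

lemma basVec_mem (s : G) (e : ℕ) :
    (fun x => rhoTil N ρ (x * (s ^ e)⁻¹)) ∈ IndSpace k N ρ := by
  have : ∀ (h : ↥N) (x : G),
      rhoTil N ρ ((↑h * x) * (s ^ e)⁻¹) = ((ρ h : kˣ) : k) * rhoTil N ρ (x * (s ^ e)⁻¹) := by
    intro h x
    rw [mul_assoc, rhoTil_mul_left h.2]
    congr 1
    rw [rhoTil_of_mem h.2]
  exact this

noncomputable def basVec (s : G) (e : ℕ) : IndSpace k N ρ :=
  ⟨_, basVec_mem N ρ s e⟩

lemma basVec_apply (s : G) (e : ℕ) (x : G) :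
    ((basVec N ρ s e : IndSpace k N ρ) : G → k) x = rhoTil N ρ (x * (s ^ e)⁻¹) := rfl

lemma indAct_basVec (s g : G) (e e' : ℕ) (hz : s ^ e' * g * (s ^ e)⁻¹ ∈ N) :
    indAct N ρ g (basVec N ρ s e) =
      rhoTil N ρ (s ^ e' * g * (s ^ e)⁻¹) • basVec N ρ s e' := by
  apply Subtype.ext
  funext x
  show rhoTil N ρ ((x * g) * (s ^ e)⁻¹) =
    rhoTil N ρ (s ^ e' * g * (s ^ e)⁻¹) * rhoTil N ρ (x * (s ^ e')⁻¹)
  have key : (x * g) * (s ^ e)⁻¹ = (x * (s ^ e')⁻¹) * (s ^ e' * g * (s ^ e)⁻¹) := by group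
  rw [key, rhoTil_mul_right _ hz, mul_comm]

end basVec

/-- Let `G/N` be cyclic of finite order `n`, generated by the image of `s`, let `ρ : N → kˣ` be a
character, and let `V` be the induced representation of `G`, of dimension `n`. If `d ∣ n`,
`d > 0`, and `g ∈ G` maps to the image of `s ^ d` in `G/N`, then `g ^ (n/d) ∈ N`, each conjugate
`s⁻ⁱ g^(n/d) sⁱ` lies in `N`, and the characteristic polynomial of the action of `g` on `V` is
`∏_{i=0}^{d-1} (T ^ (n/d) - ρ (s⁻ⁱ g^(n/d) sⁱ))`. -/
theorem charpoly_of_induced_action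
    {k G : Type*} [Field k] [Group G]
    (N : Subgroup G) [N.Normal] (ρ : N →* kˣ)
    (n d : ℕ) (hn : 0 < n) (hd : 0 < d) (hdn : d ∣ n)
    (s : G)
    (hgen : ∀ x : G ⧸ N, ∃ i : ℕ, x = (↑s : G ⧸ N) ^ i)
    (hcard : Nat.card (G ⧸ N) = n)
    (g : G) (hg : (↑g : G ⧸ N) = (↑s : G ⧸ N) ^ d)
    [FiniteDimensional k (IndSpace k N ρ)]
    (hdim : Module.finrank k (IndSpace k N ρ) = n) :
    ∃ hmem : ∀ i : ℕ, (s ^ i)⁻¹ * g ^ (n / d) * s ^ i ∈ N,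
      g ^ (n / d) ∈ N ∧
      LinearMap.charpoly (indAct N ρ g) =
        ∏ i ∈ Finset.range d,
          (X ^ (n / d) - C ((ρ ⟨(s ^ i)⁻¹ * g ^ (n / d) * s ^ i, hmem i⟩ : kˣ) : k)) := by
  set m := n / d with hmdef
  have hnm : n = d * m := by
    rw [hmdef, Nat.mul_div_cancel' hdn]
  have hm0 : 0 < m := Nat.div_pos (Nat.le_of_dvd hn hdn) hd
  -- order of the image of s
  have horder : orderOf ((s : G ⧸ N)) = n := by
    rw [orderOf_eq_card_of_forall_mem_zpowers, hcard]
    intro x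
    obtain ⟨i, hi⟩ := hgen x
    exact Subgroup.mem_zpowers_iff.mpr ⟨(i : ℤ), by rw [zpow_natCast]; exact hi.symm⟩
  -- membership criteria
  have hmodN : ∀ a b : ℕ, s ^ a * (s ^ b)⁻¹ ∈ N ↔ a % n = b % n := by
    intro a b
    rw [← QuotientGroup.eq_one_iff]
    have : ((s ^ a * (s ^ b)⁻¹ : G) : G ⧸ N) =
        ((s : G ⧸ N)) ^ a * (((s : G ⧸ N)) ^ b)⁻¹ := by
      push_cast
      rfl
    rw [this, mul_inv_eq_one, pow_eq_pow_iff_modEq, horder]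
    rfl
  have hmemN : ∀ a b : ℕ, (a + d) % n = b % n → s ^ a * g * (s ^ b)⁻¹ ∈ N := by
    intro a b hab
    rw [← QuotientGroup.eq_one_iff]
    have : ((s ^ a * g * (s ^ b)⁻¹ : G) : G ⧸ N) =
        ((s : G ⧸ N)) ^ a * (g : G ⧸ N) * (((s : G ⧸ N)) ^ b)⁻¹ := by
      push_cast
      rfl
    rw [this, hg, ← pow_add, mul_inv_eq_one, pow_eq_pow_iff_modEq, horder]
    exact hab
  have hmemT : ∀ a t : ℕ, s ^ a * g ^ t * (s ^ (a + d * t))⁻¹ ∈ N := by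
    intro a t
    rw [← QuotientGroup.eq_one_iff]
    have : ((s ^ a * g ^ t * (s ^ (a + d * t))⁻¹ : G) : G ⧸ N) =
        ((s : G ⧸ N)) ^ a * ((g : G ⧸ N)) ^ t * (((s : G ⧸ N)) ^ (a + d * t))⁻¹ := by
      push_cast
      rfl
    rw [this, hg, ← pow_mul, ← pow_add, mul_inv_eq_one]
  have hgm : g ^ m ∈ N := by
    rw [← QuotientGroup.eq_one_iff]
    have : ((g ^ m : G) : G ⧸ N) = ((g : G ⧸ N)) ^ m := by push_cast; rfl
    rw [this, hg, ← pow_mul, ← hnm, ← horder, pow_orderOf_eq_one]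
  have hNormal : N.Normal := inferInstance
  have hmem : ∀ i : ℕ, (s ^ i)⁻¹ * g ^ m * s ^ i ∈ N := by
    intro i
    have := hNormal.conj_mem _ hgm (s ^ i)⁻¹
    rwa [inv_inv] at this
  refine ⟨hmem, hgm, ?_⟩
  -- the exponent map and its properties
  have hElt : ∀ p : Fin m × Fin d, (p.2 : ℕ) + d * (p.1 : ℕ) < n := by
    rintro ⟨j, i⟩
    have h1 : (i : ℕ) < d := i.isLt
    have h2 : (j : ℕ) < m := j.isLt
    calc (i : ℕ) + d * (j : ℕ) < d + d * (j : ℕ) := by omega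
    _ = d * ((j : ℕ) + 1) := by ring
    _ ≤ d * m := Nat.mul_le_mul_left d (by omega)
    _ = n := hnm.symm
  have hEinj : ∀ p q : Fin m × Fin d,
      (p.2 : ℕ) + d * (p.1 : ℕ) = (q.2 : ℕ) + d * (q.1 : ℕ) → p = q := by
    rintro ⟨j, i⟩ ⟨j', i'⟩ hpq
    have h1 : ((i : ℕ) + d * (j : ℕ)) % d = ((i' : ℕ) + d * (j' : ℕ)) % d := by rw [hpq]
    rw [Nat.add_mul_mod_self_left, Nat.add_mul_mod_self_left,
      Nat.mod_eq_of_lt i.isLt, Nat.mod_eq_of_lt i'.isLt] at h1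
    have h2 : ((i : ℕ) + d * (j : ℕ)) / d = ((i' : ℕ) + d * (j' : ℕ)) / d := by rw [hpq]
    rw [Nat.add_mul_div_left _ _ hd, Nat.add_mul_div_left _ _ hd,
      Nat.div_eq_of_lt i.isLt, Nat.div_eq_of_lt i'.isLt] at h2
    simp only [Prod.mk.injEq, Fin.ext_iff]
    omega
  -- evaluation of basis vectors at powers of s
  have heval : ∀ p q : Fin m × Fin d,
      ((basVec N ρ s ((p.2 : ℕ) + d * (p.1 : ℕ)) : IndSpace k N ρ) : G → k)
        (s ^ ((q.2 : ℕ) + d * (q.1 : ℕ))) = if p = q then 1 else 0 := by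
    intro p q
    rw [basVec_apply]
    by_cases hpq : p = q
    · subst hpq
      rw [if_pos rfl, mul_inv_cancel, rhoTil_one]
    · rw [if_neg hpq]
      apply rhoTil_of_notMem
      rw [hmodN]
      rw [Nat.mod_eq_of_lt (hElt q), Nat.mod_eq_of_lt (hElt p)]
      intro h
      exact hpq (hEinj p q (h.symm))
  -- linear independence and the basis
  have li : LinearIndependent k
      (fun p : Fin m × Fin d => basVec N ρ s ((p.2 : ℕ) + d * (p.1 : ℕ))) := by
    rw [Fintype.linearIndependent_iff]
    intro a ha q
    set L : IndSpace k N ρ →ₗ[k] k :=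
      (LinearMap.proj (s ^ ((q.2 : ℕ) + d * (q.1 : ℕ)))).comp
        (Submodule.subtype (IndSpace k N ρ)) with hL
    have hL' : ∀ f : IndSpace k N ρ, L f = (f : G → k) (s ^ ((q.2 : ℕ) + d * (q.1 : ℕ))) :=
      fun f => rfl
    have h2 : L (∑ p : Fin m × Fin d,
        a p • basVec N ρ s ((p.2 : ℕ) + d * (p.1 : ℕ))) = 0 := by rw [ha, map_zero]
    rw [map_sum] at h2
    have h3 : ∀ p : Fin m × Fin d,
        L (a p • basVec N ρ s ((p.2 : ℕ) + d * (p.1 : ℕ))) = if p = q then a p else 0 := by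
      intro p
      rw [_root_.map_smul, smul_eq_mul, hL', heval p q]
      by_cases hpq : p = q <;> simp [hpq]
    rw [Finset.sum_congr rfl (fun p _ => h3 p), Finset.sum_ite_eq' Finset.univ q a] at h2
    simpa using h2
  have hcardeq : Fintype.card (Fin m × Fin d) = Module.finrank k (IndSpace k N ρ) := by
    rw [Fintype.card_prod, Fintype.card_fin, Fintype.card_fin, hdim, hnm, Nat.mul_comm]
  have : Nonempty (Fin m × Fin d) := ⟨(⟨0, hm0⟩, ⟨0, hd⟩)⟩
  set b := basisOfLinearIndependentOfCardEqFinrank li hcardeq with hbdef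
  have hb : ⇑b = fun p : Fin m × Fin d => basVec N ρ s ((p.2 : ℕ) + d * (p.1 : ℕ)) :=
    coe_basisOfLinearIndependentOfCardEqFinrank li hcardeq
  -- cyclic predecessor within a block
  have hpcN : ∀ c : Fin m, (if (c : ℕ) = 0 then m - 1 else (c : ℕ) - 1) < m := by
    intro c
    have hcm := c.isLt
    by_cases hc : (c : ℕ) = 0
    · rw [if_pos hc]; omega
    · rw [if_neg hc]; omega
  have hpc_succ : ∀ c : Fin m,
      ((if (c : ℕ) = 0 then m - 1 else (c : ℕ) - 1) + 1) % m = (c : ℕ) := by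
    intro c
    have hcm := c.isLt
    by_cases hc : (c : ℕ) = 0
    · simp only [hc, if_pos]
      rw [Nat.sub_add_cancel hm0, Nat.mod_self]
    · rw [if_neg hc, Nat.sub_add_cancel (by omega), Nat.mod_eq_of_lt hcm]
  have hpc_iff : ∀ r c : Fin m, (r = (⟨if (c : ℕ) = 0 then m - 1 else (c : ℕ) - 1, hpcN c⟩ : Fin m))
      ↔ ((r:ℕ)+1 = (c:ℕ) ∨ ((r:ℕ) = m-1 ∧ (c:ℕ) = 0)) := by
    intro r c
    have hval : ((⟨if (c : ℕ) = 0 then m - 1 else (c : ℕ) - 1, hpcN c⟩ : Fin m) : ℕ) =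
        if (c : ℕ) = 0 then m - 1 else (c : ℕ) - 1 := rfl
    rw [Fin.ext_iff, hval]
    have hcm := c.isLt
    have hrm := r.isLt
    by_cases hc : (c : ℕ) = 0
    · rw [if_pos hc]; omega
    · rw [if_neg hc]; omega
  -- the scalar by which g acts
  have hzmem : ∀ c : Fin m, ∀ i : Fin d,
      s ^ ((i : ℕ) + d * (if (c : ℕ) = 0 then m - 1 else (c : ℕ) - 1)) * g *
        (s ^ ((i : ℕ) + d * (c : ℕ)))⁻¹ ∈ N := by
    intro c i
    apply hmemN
    by_cases hc : (c : ℕ) = 0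
    · rw [hc, if_pos rfl]
      have : (i : ℕ) + d * (m - 1) + d = (i : ℕ) + d * 0 + n := by
        have : d * (m - 1) + d = d * m := by
          rw [← Nat.mul_succ]
          congr 1
          omega
        omega
      rw [this, Nat.add_mod_right]
    · rw [if_neg hc]
      congr 1
      have : d * ((c : ℕ) - 1) + d = d * (c : ℕ) := by
        rw [← Nat.mul_succ]
        congr 1
        omega
      omega
  -- action of g on basis vectors
  have hact : ∀ c : Fin m, ∀ i : Fin d,
      indAct N ρ g (basVec N ρ s ((i : ℕ) + d * (c : ℕ))) =
        rhoTil N ρ (s ^ ((i : ℕ) + d * (if (c : ℕ) = 0 then m - 1 else (c : ℕ) - 1)) * g *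
            (s ^ ((i : ℕ) + d * (c : ℕ)))⁻¹) •
          basVec N ρ s ((i : ℕ) + d * (if (c : ℕ) = 0 then m - 1 else (c : ℕ) - 1)) :=
    fun c i => indAct_basVec N ρ s g _ _ (hzmem c i)
  -- identification of the matrix of the action
  have hmat : LinearMap.toMatrix b b (indAct N ρ g) = Matrix.blockDiagonal
      (fun i : Fin d => Matrix.of fun r c : Fin m =>
        if ((r:ℕ)+1 = (c:ℕ) ∨ ((r:ℕ) = m-1 ∧ (c:ℕ) = 0)) then
          rhoTil N ρ (s ^ ((i : ℕ) + d * (r : ℕ)) * g *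
            (s ^ ((i : ℕ) + d * (((r : ℕ) + 1) % m)))⁻¹)
        else 0) := by
    ext ⟨r, i⟩ ⟨c, j⟩
    rw [LinearMap.toMatrix_apply, hb]
    show (b.repr (indAct N ρ g (basVec N ρ s ((j : ℕ) + d * (c : ℕ))))) (r, i) = _
    rw [hact c j]
    have hvb : basVec N ρ s ((j : ℕ) + d * (if (c : ℕ) = 0 then m - 1 else (c : ℕ) - 1)) =
        b ((⟨if (c : ℕ) = 0 then m - 1 else (c : ℕ) - 1, hpcN c⟩ : Fin m), j) := by
      rw [hb]
    rw [hvb, _root_.map_smul, Module.Basis.repr_self, Finsupp.smul_apply, Finsupp.single_apply,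
      smul_eq_mul]
    rw [Matrix.blockDiagonal_apply]
    by_cases hij : i = j
    · subst hij
      rw [if_pos rfl, Matrix.of_apply]
      by_cases hcyc : ((r:ℕ)+1 = (c:ℕ) ∨ ((r:ℕ) = m-1 ∧ (c:ℕ) = 0))
      · have hr : (⟨if (c : ℕ) = 0 then m - 1 else (c : ℕ) - 1, hpcN c⟩ : Fin m) = r :=
          ((hpc_iff r c).mpr hcyc).symm
        have hrval : (if (c : ℕ) = 0 then m - 1 else (c : ℕ) - 1) = (r : ℕ) := by
          rw [← hr]
        have hrc' : ((r : ℕ) + 1) % m = (c : ℕ) := by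
          rw [← hrval]
          exact hpc_succ c
        have hpair : ((⟨if (c : ℕ) = 0 then m - 1 else (c : ℕ) - 1, hpcN c⟩ : Fin m), i) = (r, i) := by
          rw [hr]
        rw [if_pos hcyc, if_pos hpair, mul_one, hrval, hrc']
      · have hr : ¬ ((⟨if (c : ℕ) = 0 then m - 1 else (c : ℕ) - 1, hpcN c⟩ : Fin m), i) = (r, i) := by
          intro hcon
          apply hcyc
          apply (hpc_iff r c).mp
          exact ((Prod.mk.injEq _ _ _ _).mp hcon).1.symm
        rw [if_neg hcyc, if_neg hr, mul_zero]
    · have hr : ¬ ((⟨if (c : ℕ) = 0 then m - 1 else (c : ℕ) - 1, hpcN c⟩ : Fin m), j) = (r, i) := by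
        intro hcon
        exact hij (((Prod.mk.injEq _ _ _ _).mp hcon).2.symm ▸ rfl)
      rw [if_neg hr, if_neg (fun h : i = j => hij h), mul_zero]
  -- telescoping products
  have tel : ∀ a t : ℕ,
      (∏ u ∈ Finset.range t,
        rhoTil N ρ (s ^ (a + d * u) * g * (s ^ (a + d * (u + 1)))⁻¹)) =
      rhoTil N ρ (s ^ a * g ^ t * (s ^ (a + d * t))⁻¹) := by
    intro a t
    induction t with
    | zero =>
        rw [Finset.prod_range_zero, pow_zero, mul_one, Nat.mul_zero, Nat.add_zero,
          mul_inv_cancel, rhoTil_one]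
    | succ t ih =>
        have hmod : (a + d * t + d) % n = (a + d * (t + 1)) % n := by
          congr 1
          rw [Nat.mul_succ]
          omega
        rw [Finset.prod_range_succ, ih,
          ← rhoTil_mul_of_mem (hmemT a t) (hmemN (a + d * t) (a + d * (t + 1)) hmod)]
        congr 1
        have h1 : a + d * (t + 1) = (a + d * t) + d := by rw [Nat.mul_succ]; omega
        rw [h1, pow_succ]
        group
  have tot : ∀ a : ℕ,
      (∏ r : Fin m,
        rhoTil N ρ (s ^ (a + d * (r : ℕ)) * g * (s ^ (a + d * (((r : ℕ) + 1) % m)))⁻¹)) =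
      rhoTil N ρ (s ^ a * g ^ m * (s ^ a)⁻¹) := by
    intro a
    rw [Fin.prod_univ_eq_prod_range
      (fun u => rhoTil N ρ (s ^ (a + d * u) * g * (s ^ (a + d * ((u + 1) % m)))⁻¹)) m]
    have hm1 : m = (m - 1) + 1 := by omega
    rw [show Finset.range m = Finset.range ((m - 1) + 1) by rw [← hm1]]
    rw [Finset.prod_range_succ]
    have hlast : (((m - 1) + 1) % m) = 0 := by rw [← hm1, Nat.mod_self]
    have hstep : ∀ u ∈ Finset.range (m - 1),
        rhoTil N ρ (s ^ (a + d * u) * g * (s ^ (a + d * ((u + 1) % m)))⁻¹) =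
        rhoTil N ρ (s ^ (a + d * u) * g * (s ^ (a + d * (u + 1)))⁻¹) := by
      intro u hu
      rw [Finset.mem_range] at hu
      rw [Nat.mod_eq_of_lt (by omega)]
    rw [Finset.prod_congr rfl hstep, tel a (m - 1), hlast, Nat.mul_zero, Nat.add_zero]
    have hd1 : d * (m - 1) + d = d * m := by
      rw [← Nat.mul_succ]
      congr 1
      omega
    have hmod : (a + d * (m - 1) + d) % n = a % n := by
      rw [show a + d * (m - 1) + d = a + n by omega]
      exact Nat.add_mod_right a n
    rw [← rhoTil_mul_of_mem (hmemT a (m - 1)) (hmemN (a + d * (m - 1)) a hmod)]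
    congr 1
    rw [show g ^ m = g ^ ((m - 1) + 1) by rw [← hm1], pow_succ]
    group
  -- periodicity of the conjugated values
  have hsd : g * (s ^ (d : ℤ))⁻¹ ∈ N := by
    rw [zpow_natCast, ← QuotientGroup.eq_one_iff]
    have : ((g * (s ^ d)⁻¹ : G) : G ⧸ N) = (g : G ⧸ N) * (((s : G ⧸ N)) ^ d)⁻¹ := by rfl
    rw [this, hg, mul_inv_cancel]
  have Φmem : ∀ a : ℤ, s ^ a * g ^ m * (s ^ a)⁻¹ ∈ N := fun a => hNormal.conj_mem _ hgm (s ^ a)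
  have Φstep : ∀ a : ℤ, rhoTil N ρ (s ^ (a + (d : ℤ)) * g ^ m * (s ^ (a + (d : ℤ)))⁻¹) =
      rhoTil N ρ (s ^ a * g ^ m * (s ^ a)⁻¹) := by
    intro a
    have hun : s ^ a * (g * (s ^ (d : ℤ))⁻¹) * (s ^ a)⁻¹ ∈ N := hNormal.conj_mem _ hsd (s ^ a)
    have huin : (s ^ a * (g * (s ^ (d : ℤ))⁻¹) * (s ^ a)⁻¹)⁻¹ ∈ N := N.inv_mem hun
    have h1 : s ^ (a + (d : ℤ)) * g ^ m * (s ^ (a + (d : ℤ)))⁻¹ =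
        ((s ^ a * (g * (s ^ (d : ℤ))⁻¹) * (s ^ a)⁻¹)⁻¹ * (s ^ a * g ^ m * (s ^ a)⁻¹)) *
          (s ^ a * (g * (s ^ (d : ℤ))⁻¹) * (s ^ a)⁻¹) := by
      group
    rw [h1, rhoTil_mul_of_mem (N.mul_mem huin (Φmem a)) hun,
      rhoTil_mul_of_mem huin (Φmem a)]
    have h2 : rhoTil N ρ (s ^ a * (g * (s ^ (d : ℤ))⁻¹) * (s ^ a)⁻¹)⁻¹ *
        rhoTil N ρ (s ^ a * (g * (s ^ (d : ℤ))⁻¹) * (s ^ a)⁻¹) = 1 := by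
      rw [← rhoTil_mul_of_mem huin hun, inv_mul_cancel, rhoTil_one]
    rw [mul_right_comm, h2, one_mul]
  have Φper : ∀ (a : ℤ) (t : ℕ),
      rhoTil N ρ (s ^ (a + (d : ℤ) * (t : ℤ)) * g ^ m * (s ^ (a + (d : ℤ) * (t : ℤ)))⁻¹) =
      rhoTil N ρ (s ^ a * g ^ m * (s ^ a)⁻¹) := by
    intro a t
    induction t with
    | zero => norm_num
    | succ t ih =>
        have h1 : a + (d : ℤ) * ((t : ℕ) + 1 : ℕ) = (a + (d : ℤ) * (t : ℤ)) + (d : ℤ) := by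
          push_cast
          ring
        rw [h1, Φstep, ih]
  have Φcongr : ∀ a b : ℤ, a % (d : ℤ) = b % (d : ℤ) →
      rhoTil N ρ (s ^ a * g ^ m * (s ^ a)⁻¹) = rhoTil N ρ (s ^ b * g ^ m * (s ^ b)⁻¹) := by
    have key : ∀ a b : ℤ, a ≤ b → a % (d : ℤ) = b % (d : ℤ) →
        rhoTil N ρ (s ^ a * g ^ m * (s ^ a)⁻¹) = rhoTil N ρ (s ^ b * g ^ m * (s ^ b)⁻¹) := by
      intro a b hab hmod
      obtain ⟨j, hj⟩ := Int.ModEq.dvd (show a ≡ b [ZMOD (d : ℤ)] from hmod)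
      have hd' : (0 : ℤ) < (d : ℤ) := by exact_mod_cast hd
      rcases le_or_gt 0 j with hj0 | hj0
      · have hb : b = a + (d : ℤ) * ((j.toNat : ℕ) : ℤ) := by
          rw [Int.toNat_of_nonneg hj0]
          linarith
        rw [hb, Φper a j.toNat]
      · exfalso
        have : (d : ℤ) * j < 0 := mul_neg_of_pos_of_neg hd' hj0
        linarith
    intro a b hmod
    rcases le_total a b with h | h
    · exact key a b h hmod
    · exact (key b a h hmod.symm).symm
  -- assembling the characteristic polynomial
  rw [← LinearMap.charpoly_toMatrix (indAct N ρ g) b, hmat, charpoly_blockDiagonal]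
  rw [Finset.prod_congr rfl (fun i _ => charpoly_cyclic m hm0 _)]
  have hblocks : ∀ i : Fin d,
      ((X : k[X]) ^ m - C (∏ r : Fin m,
        rhoTil N ρ (s ^ ((i : ℕ) + d * (r : ℕ)) * g *
          (s ^ ((i : ℕ) + d * (((r : ℕ) + 1) % m)))⁻¹))) =
      X ^ m - C (rhoTil N ρ (s ^ (i : ℕ) * g ^ m * (s ^ (i : ℕ))⁻¹)) := by
    intro i
    rw [tot (i : ℕ)]
  rw [Finset.prod_congr rfl (fun i _ => hblocks i)]
  rw [Fin.prod_univ_eq_prod_range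
    (fun a => (X : k[X]) ^ m - C (rhoTil N ρ (s ^ a * g ^ m * (s ^ a)⁻¹))) d]
  -- final reindexing
  have hfact : ∀ i ∈ Finset.range d,
      ((X : k[X]) ^ m - C ((ρ ⟨(s ^ i)⁻¹ * g ^ m * s ^ i, hmem i⟩ : kˣ) : k)) =
      X ^ m - C (rhoTil N ρ (s ^ ((d - i) % d) * g ^ m * (s ^ ((d - i) % d))⁻¹)) := by
    intro i hi
    rw [Finset.mem_range] at hi
    rw [← rhoTil_of_mem (hmem i)]
    congr 2
    have e1 : (s ^ i)⁻¹ * g ^ m * s ^ i =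
        s ^ (-(i : ℤ)) * g ^ m * (s ^ (-(i : ℤ)))⁻¹ := by
      rw [_root_.zpow_neg, zpow_natCast, inv_inv]
    have e2 : s ^ ((d - i) % d) * g ^ m * (s ^ ((d - i) % d))⁻¹ =
        s ^ ((((d - i) % d : ℕ) : ℤ)) * g ^ m * (s ^ ((((d - i) % d : ℕ) : ℤ)))⁻¹ := by
      rw [zpow_natCast]
    rw [e1, e2]
    apply Φcongr
    have h3 : ((((d - i) % d : ℕ) : ℤ)) % (d : ℤ) = (((d - i : ℕ) : ℤ)) % (d : ℤ) := by
      rw [Int.natCast_mod]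
      exact Int.emod_emod_of_dvd _ dvd_rfl
    rw [h3, Nat.cast_sub hi.le]
    rw [show (d : ℤ) - (i : ℤ) = -(i : ℤ) + (d : ℤ) * 1 by ring, Int.add_mul_emod_self_left]
  rw [Finset.prod_congr rfl hfact]
  have hinv : ∀ a ∈ Finset.range d, (d - (d - a) % d) % d = a := by
    intro a ha
    rw [Finset.mem_range] at ha
    rcases Nat.eq_zero_or_pos a with h0 | h0
    · subst h0
      rw [Nat.sub_zero, Nat.mod_self, Nat.sub_zero, Nat.mod_self]
    · rw [Nat.mod_eq_of_lt (by omega : d - a < d), show d - (d - a) = a by omega,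
        Nat.mod_eq_of_lt ha]
  refine Finset.prod_nbij' (fun a => (d - a) % d) (fun a => (d - a) % d) ?_ ?_ ?_ ?_ ?_
  · intro a ha
    exact Finset.mem_range.mpr (Nat.mod_lt _ hd)
  · intro a ha
    exact Finset.mem_range.mpr (Nat.mod_lt _ hd)
  · exact hinv
  · exact hinv
  · intro a ha
    rw [hinv a ha]
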